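/- arXiv:1105.3235 — 2 statements merged into one kernel-verified Lean document; each statement's English description precedes it below -/
import Mathlib

section
/- Let S = {2m² - m : m ∈ ℤ} ∪ {2m² + 4m/3 + 7/72 : m ∈ ℤ} ∪ {2m² + 2m + 3/8 : m ∈ ℤ} and, for c > -2, let ĉ = (12-2c)/(2+c). If c > -2 and both c/2 and ĉ/2 lie in S, then c ∈ {0, 2, 6}. -/
/-- The Morales–Ramis admissible set for homogeneous potentials of degree 4. -/
def moralesRamisSet : Set ℝ :=
  {x | ∃ m : ℤ, x = 2 * (m : ℝ) ^ 2 - m ∨ x = 2 * (m : ℝ) ^ 2 + (4 / 3) * m + 7 / 72 ∨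
    x = 2 * (m : ℝ) ^ 2 + 2 * m + 3 / 8}

lemma moralesRamisSet_nonneg {x : ℝ} (hx : x ∈ moralesRamisSet) : 0 ≤ x := by
  obtain ⟨m, hm | hm | hm⟩ := hx <;>
  · have h : m ≤ -1 ∨ m = 0 ∨ 1 ≤ m := by omega
    have h' : (m : ℝ) ≤ -1 ∨ (m : ℝ) = 0 ∨ (1 : ℝ) ≤ m := by exact_mod_cast h
    rcases h' with h' | h' | h' <;> subst hm <;>
      nlinarith [sq_nonneg ((m : ℝ)), sq_nonneg ((m : ℝ) + 1)]

lemma moralesRamisSet_cases {x : ℝ} (hx : x ∈ moralesRamisSet) (hx3 : x ≤ 3) :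
    x = 0 ∨ x = 7 / 72 ∨ x = 3 / 8 ∨ x = 55 / 72 ∨ x = 1 ∨ x = 3 := by
  obtain ⟨m, hm | hm | hm⟩ := hx
  · have hr : 2 * (m : ℝ) ^ 2 - m ≤ 3 := hm ▸ hx3
    have hz : 2 * m ^ 2 - m ≤ 3 := by exact_mod_cast hr
    have hl : -1 ≤ m := by nlinarith [sq_nonneg (m + 1), sq_nonneg (m + 2)]
    have hu : m ≤ 1 := by nlinarith [sq_nonneg (m - 1), sq_nonneg (m - 2)]
    interval_cases m <;> norm_num at hm <;> tauto
  · have hr : 2 * (m : ℝ) ^ 2 + (4 / 3) * m + 7 / 72 ≤ 3 := hm ▸ hx3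
    have hr' : 144 * (m : ℝ) ^ 2 + 96 * m + 7 ≤ 216 := by nlinarith
    have hz : 144 * m ^ 2 + 96 * m + 7 ≤ 216 := by exact_mod_cast hr'
    have hl : -1 ≤ m := by nlinarith [sq_nonneg (m + 1), sq_nonneg (m + 2)]
    have hu : m ≤ 0 := by nlinarith [sq_nonneg (m - 1), sq_nonneg m]
    interval_cases m <;> norm_num at hm <;> tauto
  · have hr : 2 * (m : ℝ) ^ 2 + 2 * m + 3 / 8 ≤ 3 := hm ▸ hx3
    have hr' : 16 * (m : ℝ) ^ 2 + 16 * m + 3 ≤ 24 := by nlinarith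
    have hz : 16 * m ^ 2 + 16 * m + 3 ≤ 24 := by exact_mod_cast hr'
    have hl : -1 ≤ m := by nlinarith [sq_nonneg (m + 1), sq_nonneg (m + 2)]
    have hu : m ≤ 0 := by nlinarith [sq_nonneg (m - 1), sq_nonneg m]
    interval_cases m <;> norm_num at hm <;> tauto

/-- If both `c/2` and `ĉ/2` (with `ĉ = (12-2c)/(2+c)`) lie in the Morales–Ramis set and
`c > -2`, then `c ∈ {0, 2, 6}`: the number-theoretic core of the non-integrability
argument for the quartic potential. -/
theorem quartic_integrable_values (c : ℝ) (hc : c > -2)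
    (h1 : c / 2 ∈ moralesRamisSet)
    (h2 : ((12 - 2 * c) / (2 + c)) / 2 ∈ moralesRamisSet) :
    c = 0 ∨ c = 2 ∨ c = 6 := by
  have hcpos : (0 : ℝ) < 2 + c := by linarith
  have hcne : (2 : ℝ) + c ≠ 0 := ne_of_gt hcpos
  have ha0 : 0 ≤ c / 2 := moralesRamisSet_nonneg h1
  have hc0 : 0 ≤ c := by linarith
  have hb0 : 0 ≤ ((12 - 2 * c) / (2 + c)) / 2 := moralesRamisSet_nonneg h2
  have hkey : (12 - 2 * c) / (2 + c) * (2 + c) = 12 - 2 * c := div_mul_cancel₀ _ hcne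
  have hc6 : c ≤ 6 := by nlinarith
  have ha3 : c / 2 ≤ 3 := by linarith
  have hb3 : ((12 - 2 * c) / (2 + c)) / 2 ≤ 3 := by
    rw [div_le_iff₀ (by norm_num : (0:ℝ) < 2), div_le_iff₀ hcpos]; linarith
  rcases moralesRamisSet_cases h1 ha3 with h | h | h | h | h | h
  · left; linarith
  · exfalso
    have hcv : c = 7 / 36 := by linarith
    subst hcv
    rcases moralesRamisSet_cases h2 hb3 with h' | h' | h' | h' | h' | h' <;> norm_num at h'
  · exfalso
    have hcv : c = 3 / 4 := by linarith
    subst hcv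
    rcases moralesRamisSet_cases h2 hb3 with h' | h' | h' | h' | h' | h' <;> norm_num at h'
  · exfalso
    have hcv : c = 55 / 36 := by linarith
    subst hcv
    rcases moralesRamisSet_cases h2 hb3 with h' | h' | h' | h' | h' | h' <;> norm_num at h'
  · right; left; linarith
  · right; right; linarith
end

section
/- Let A be a real 2n×2n symplectic matrix with eigenvalues λ₁,…,λ_{2n}, and let 𝐋₁,…,𝐋_{2n} ⊂ ℂ be sets with λⱼ ∈ 𝐋ⱼ. Suppose (A1) 0 ∉ Im(𝐋ⱼ) for each j (i.e. every element of 𝐋ⱼ has nonzero imaginary part), and (A2) for all j, k: if {z⁻¹ : z ∈ 𝐋ⱼ} ∩ {conj(w) : w ∈ 𝐋ₖ} ≠ ∅ then j = k. Then all eigenvalues of A are distinct and lie on the unit circle. -/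
/-!
A symplectic `A` satisfies `A⁻¹ = J⁻¹ Aᵀ J`, so `A⁻¹` has the characteristic polynomial of `Aᵀ`,
which is that of `A`: the spectrum is closed under `λ ↦ λ⁻¹`, and, `A` being real, under
conjugation. Hence `λⱼ⁻¹ = conj λₖ` for some `k`, and (A2) forces `k = j`, i.e. `|λⱼ| = 1`.
If moreover `λⱼ = λₖ`, then `λⱼ⁻¹ = conj λₖ` and (A2) gives `j = k`.
-/

open Matrix in
/-- The standard Poisson matrix `J = [[0, Iₙ], [-Iₙ, 0]]`. -/
def poissonMatrix (R : Type*) [Ring R] (n : ℕ) :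
    Matrix (Fin n ⊕ Fin n) (Fin n ⊕ Fin n) R :=
  Matrix.fromBlocks 0 1 (-1) 0

open Matrix Polynomial ComplexConjugate

lemma poissonMatrix_mul_self (R : Type*) [Ring R] (n : ℕ) :
    poissonMatrix R n * poissonMatrix R n = -1 := by
  simp [poissonMatrix, fromBlocks_multiply, ← fromBlocks_one, fromBlocks_neg]

lemma isUnit_poissonMatrix (R : Type*) [Ring R] (n : ℕ) : IsUnit (poissonMatrix R n) :=
  ⟨⟨poissonMatrix R n, -poissonMatrix R n, by rw [mul_neg, poissonMatrix_mul_self, neg_neg],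
    by rw [neg_mul, poissonMatrix_mul_self, neg_neg]⟩, rfl⟩

lemma map_poissonMatrix {R S : Type*} [Ring R] [Ring S] (f : R →+* S) (n : ℕ) :
    (poissonMatrix R n).map f = poissonMatrix S n := by
  simp [poissonMatrix, fromBlocks_map, Matrix.map_neg]

namespace Matrix

variable {ι : Type*} [Fintype ι] [DecidableEq ι]

section CommRing

variable {R : Type*} [CommRing R] {J M : Matrix ι ι R}

lemma inv_mul_transpose_mul_mul_eq_one (hJ : IsUnit J) (hM : Mᵀ * J * M = J) :
    J⁻¹ * Mᵀ * J * M = 1 := by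
  rw [mul_assoc, mul_assoc, ← mul_assoc Mᵀ, hM,
    nonsing_inv_mul _ ((isUnit_iff_isUnit_det J).mp hJ)]

lemma charpoly_inv_of_transpose_mul_mul_eq (hJ : IsUnit J) (hM : Mᵀ * J * M = J) :
    M⁻¹.charpoly = M.charpoly := by
  rw [inv_eq_left_inv (inv_mul_transpose_mul_mul_eq_one hJ hM), ← hJ.unit_spec,
    charpoly_units_conj', charpoly_transpose]

end CommRing

lemma isRoot_charpoly_inv_of_transpose_mul_mul_eq {K : Type*} [Field K] {J M : Matrix ι ι K}
    (hJ : IsUnit J) (hM : Mᵀ * J * M = J) {μ : K} (hμ : M.charpoly.IsRoot μ) :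
    M.charpoly.IsRoot μ⁻¹ := by
  rcases eq_or_ne μ 0 with rfl | -
  · simpa using hμ
  have hMu : IsUnit M := (isUnit_iff_isUnit_det M).mpr
    (isUnit_det_of_left_inverse (inv_mul_transpose_mul_mul_eq_one hJ hM))
  rw [← charpoly_inv_of_transpose_mul_mul_eq hJ hM, ← mem_spectrum_iff_isRoot_charpoly,
    ← hMu.unit_spec, ← coe_units_inv, ← spectrum.map_inv, Set.mem_inv, inv_inv]
  rwa [mem_spectrum_iff_isRoot_charpoly]

lemma isRoot_conj_charpoly_map_ofReal (A : Matrix ι ι ℝ) {μ : ℂ}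
    (hμ : (A.map Complex.ofReal).charpoly.IsRoot μ) :
    (A.map Complex.ofReal).charpoly.IsRoot (conj μ) := by
  have h : (A.map Complex.ofReal).charpoly = A.charpoly.map (algebraMap ℝ ℂ) :=
    charpoly_map A (algebraMap ℝ ℂ)
  rw [IsRoot, h, eval_map_algebraMap] at hμ ⊢
  rw [Polynomial.aeval_conj, hμ, map_zero]

end Matrix

lemma Complex.norm_eq_one_of_inv_eq_conj {z : ℂ} (hz : z ≠ 0) (h : z⁻¹ = conj z) : ‖z‖ = 1 := by
  have hsq : (‖z‖ ^ 2 : ℂ) = 1 := by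
    rw [← Complex.mul_conj', ← h, mul_inv_cancel₀ hz]
  exact (pow_eq_one_iff_of_nonneg (norm_nonneg z) two_ne_zero).mp (by exact_mod_cast hsq)

section Enclosures

variable {ι : Type*} {lam : ι → ℂ} {L : ι → Set ℂ}

lemma inv_eq_conj_of_enclosures (hmem : ∀ j, lam j ∈ L j)
    (hA2 : ∀ j k, (∃ z ∈ L j, ∃ w ∈ L k, z⁻¹ = conj w) → j = k)
    (hinv : ∀ j, (lam j)⁻¹ ∈ Set.range lam) (hconj : ∀ j, conj (lam j) ∈ Set.range lam)
    (j : ι) : (lam j)⁻¹ = conj (lam j) := by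
  obtain ⟨k, hk⟩ := hinv j
  obtain ⟨k', hk'⟩ := hconj k
  have hk_eq : lam k = conj (lam k') := by rw [hk', Complex.conj_conj]
  obtain rfl : j = k' := hA2 j k' ⟨lam j, hmem j, lam k', hmem k', by rw [← hk, hk_eq]⟩
  rw [← hk, hk_eq]

lemma injective_of_enclosures (hmem : ∀ j, lam j ∈ L j)
    (hA2 : ∀ j k, (∃ z ∈ L j, ∃ w ∈ L k, z⁻¹ = conj w) → j = k)
    (h : ∀ j, (lam j)⁻¹ = conj (lam j)) : Function.Injective lam :=
  fun j k hjk => hA2 j k ⟨lam j, hmem j, lam k, hmem k, by rw [h j, hjk]⟩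

end Enclosures

open Matrix Polynomial in
/-- Let `A` be a real symplectic matrix with (complex) eigenvalues `λ₁,…,λ_{2n}`
(with multiplicity) and let `𝐋ⱼ ∋ λⱼ` be enclosures. If (A1) every element of each
`𝐋ⱼ` has nonzero imaginary part, and (A2) `{z⁻¹ : z ∈ 𝐋ⱼ} ∩ {conj w : w ∈ 𝐋ₖ} ≠ ∅`
implies `j = k`, then all eigenvalues of `A` are distinct and lie on the unit circle. -/
theorem symplectic_eigenvalue_enclosures (n : ℕ)
    (A : Matrix (Fin n ⊕ Fin n) (Fin n ⊕ Fin n) ℝ)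
    (hA : Aᵀ * poissonMatrix ℝ n * A = poissonMatrix ℝ n)
    (lam : Fin n ⊕ Fin n → ℂ)
    (hspec : (A.map (Complex.ofReal)).charpoly = ∏ j, (X - C (lam j)))
    (L : Fin n ⊕ Fin n → Set ℂ)
    (hmem : ∀ j, lam j ∈ L j)
    (hA1 : ∀ j, ∀ z ∈ L j, z.im ≠ 0)
    (hA2 : ∀ j k, (∃ z ∈ L j, ∃ w ∈ L k, z⁻¹ = starRingEnd ℂ w) → j = k) :
    Function.Injective lam ∧ ∀ j, ‖lam j‖ = 1 := by
  set B := A.map Complex.ofReal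
  have hB : Bᵀ * poissonMatrix ℂ n * B = poissonMatrix ℂ n := by
    have h := congrArg (·.map Complex.ofRealHom) hA
    simp only [Matrix.map_mul, transpose_map, map_poissonMatrix] at h
    exact h
  have hroots : ∀ μ, B.charpoly.IsRoot μ ↔ μ ∈ Set.range lam := by
    simp only [hspec, isRoot_prod, Finset.mem_univ, true_and, root_X_sub_C, Set.mem_range,
      forall_const]
  have hinv : ∀ j, (lam j)⁻¹ ∈ Set.range lam := fun j => (hroots _).1 <|
    isRoot_charpoly_inv_of_transpose_mul_mul_eq (isUnit_poissonMatrix ℂ n) hB <|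
      (hroots _).2 ⟨j, rfl⟩
  have hconj : ∀ j, conj (lam j) ∈ Set.range lam := fun j => (hroots _).1 <|
    isRoot_conj_charpoly_map_ofReal A <| (hroots _).2 ⟨j, rfl⟩
  have hinv_eq_conj := inv_eq_conj_of_enclosures hmem hA2 hinv hconj
  have hne : ∀ j, lam j ≠ 0 := fun j h => hA1 j _ (hmem j) (by rw [h, Complex.zero_im])
  exact ⟨injective_of_enclosures hmem hA2 hinv_eq_conj,
    fun j => Complex.norm_eq_one_of_inv_eq_conj (hne j) (hinv_eq_conj j)⟩
end
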